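/- arXiv:2605.16093 — 5 statements merged into one kernel-verified Lean document; each statement's English description precedes it below -/
import Mathlib

section
/- For any four density operators ρ₀₀, ρ₀₁, ρ₁₀, ρ₁₁ on a 2-dimensional complex Hilbert space, defining Δ₁ = (1/4)‖(ρ₀₀ + ρ₀₁) − (ρ₁₀ + ρ₁₁)‖₁ and Δ₂ = (1/4)‖(ρ₀₀ + ρ₁₀) − (ρ₀₁ + ρ₁₁)‖₁ (trace norms), one has Δ₁² + Δ₂² ≤ 1. -/
open Matrix
open scoped ComplexOrder

/-- Trace norm (sum of singular values) of a square complex matrix,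
defined as the trace of the positive square root of `Xᴴ * X`. -/
noncomputable def traceNorm {n : ℕ} (X : Matrix (Fin n) (Fin n) ℂ) : ℝ :=
  (((Matrix.posSemidef_conjTranspose_mul_self X).1.eigenvectorUnitary.1 *
      diagonal (((↑) : ℝ → ℂ) ∘ (√·) ∘ (Matrix.posSemidef_conjTranspose_mul_self X).1.eigenvalues) *
      (star (Matrix.posSemidef_conjTranspose_mul_self X).1.eigenvectorUnitary :
        Matrix (Fin n) (Fin n) ℂ)).trace).re

/-- A density operator: positive semidefinite with unit trace. -/
def IsDensityOp {n : ℕ} (ρ : Matrix (Fin n) (Fin n) ℂ) : Prop :=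
  ρ.PosSemidef ∧ ρ.trace = 1

lemma traceNorm_of_sq_scalar {X : Matrix (Fin 2) (Fin 2) ℂ} {c : ℝ} (hc : 0 ≤ c)
    (h : Xᴴ * X = (c:ℂ) • 1) : traceNorm X = 2 * Real.sqrt c := by
  have hpsd : ((Real.sqrt c : ℂ) • (1 : Matrix (Fin 2) (Fin 2) ℂ)).PosSemidef := by
    rw [smul_one_eq_diagonal]
    exact Matrix.PosSemidef.diagonal (fun i => by
      simpa using Complex.zero_le_real.mpr (Real.sqrt_nonneg c))
  have hsq : ((Real.sqrt c : ℂ) • (1 : Matrix (Fin 2) (Fin 2) ℂ))^2 = Xᴴ * X := by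
    rw [h, smul_pow, one_pow, ← Complex.ofReal_pow, Real.sq_sqrt hc]
  have hA := (Matrix.posSemidef_conjTranspose_mul_self X).1
  have hs : spectrum ℝ (Xᴴ * X) = {c} := by
    rw [h, Complex.coe_smul, ← Algebra.algebraMap_eq_smul_one, spectrum.scalar_eq]
  have hev : ∀ i, hA.eigenvalues i = c := by
    intro i
    have hm := hA.eigenvalues_mem_spectrum_real i
    rw [hs] at hm
    simpa using hm
  rw [traceNorm, Matrix.trace_mul_cycle, Unitary.coe_star_mul_self, one_mul, trace_diagonal]
  simp [Fin.sum_univ_two, hev]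

lemma density_facts {ρ : Matrix (Fin 2) (Fin 2) ℂ} (h : IsDensityOp ρ) :
    (ρ 0 0).im = 0 ∧ (ρ 1 1).im = 0 ∧ ρ 1 0 = starRingEnd ℂ (ρ 0 1) ∧
    (ρ 0 0).re + (ρ 1 1).re = 1 ∧ 0 ≤ (ρ 0 0).re ∧ 0 ≤ (ρ 1 1).re ∧
    Complex.normSq (ρ 0 1) ≤ (ρ 0 0).re * (ρ 1 1).re := by
  obtain ⟨hPSD, htr⟩ := h
  obtain ⟨hH, hQ⟩ := posSemidef_iff_dotProduct_mulVec.mp hPSD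
  have h10 : ρ 1 0 = starRingEnd ℂ (ρ 0 1) := by
    have := congrFun (congrFun hH 1) 0
    simpa [conjTranspose_apply] using this.symm
  have h00 : (ρ 0 0).im = 0 := by
    have := congrFun (congrFun hH 0) 0
    simp [conjTranspose_apply, Complex.ext_iff] at this
    linarith [this]
  have h11 : (ρ 1 1).im = 0 := by
    have := congrFun (congrFun hH 1) 1
    simp [conjTranspose_apply, Complex.ext_iff] at this
    linarith [this]
  have htr' : (ρ 0 0).re + (ρ 1 1).re = 1 := by
    have : (ρ 0 0 + ρ 1 1) = 1 := by
      rw [← htr]; simp [Matrix.trace, Fin.sum_univ_two]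
    have := congrArg Complex.re this
    simpa using this
  have hp : 0 ≤ (ρ 0 0).re := by
    have := hQ ![1, 0]
    rw [Complex.le_def] at this
    have h1 := this.1
    simpa [dotProduct, mulVec, Fin.sum_univ_two] using h1
  have hq : 0 ≤ (ρ 1 1).re := by
    have := hQ ![0, 1]
    rw [Complex.le_def] at this
    have h1 := this.1
    simpa [dotProduct, mulVec, Fin.sum_univ_two] using h1
  have hdet : Complex.normSq (ρ 0 1) ≤ (ρ 0 0).re * (ρ 1 1).re := by
    have hA := hQ ![ρ 0 1, -(ρ 0 0)]
    have hB := hQ ![ρ 1 1, -(ρ 1 0)]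
    rw [Complex.le_def] at hA hB
    have hA1 := hA.1
    have hB1 := hB.1
    simp [dotProduct, mulVec, Fin.sum_univ_two, h10] at hA1 hB1
    simp [Complex.add_re, Complex.mul_re, Complex.conj_re, Complex.conj_im,
      Complex.neg_re, Complex.neg_im, Complex.normSq, h00, h11] at hA1 hB1 ⊢
    nlinarith [hA1, hB1, htr', hp, hq]
  exact ⟨h00, h11, h10, htr', hp, hq, hdet⟩

lemma sq_scalar {X : Matrix (Fin 2) (Fin 2) ℂ} (h1 : X 1 1 = - X 0 0)
    (h2 : X 1 0 = starRingEnd ℂ (X 0 1)) (h3 : (X 0 0).im = 0) :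
    Xᴴ * X = ((((X 0 0).re^2 + Complex.normSq (X 0 1) : ℝ)) : ℂ) • 1 := by
  have h00 : X 0 0 = ((X 0 0).re : ℂ) := by
    rw [Complex.ext_iff]; simp [h3]
  ext i j
  fin_cases i <;> fin_cases j <;>
    simp [mul_apply, Fin.sum_univ_two, conjTranspose_apply, h1, h2, Matrix.smul_apply,
      one_apply, Complex.ext_iff, Complex.normSq, Complex.mul_re, Complex.mul_im,
      Complex.conj_re, Complex.conj_im, h3, ← Complex.ofReal_pow, Complex.ofReal_re,
      Complex.ofReal_im] <;> constructor <;> ring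

lemma key_real (p1 q1 p2 q2 n1 n2 r : ℝ) (hp1 : 0 ≤ p1) (hq1 : 0 ≤ q1)
    (hp2 : 0 ≤ p2) (hq2 : 0 ≤ q2) (hs1 : p1 + q1 = 1) (hs2 : p2 + q2 = 1)
    (hn1 : 0 ≤ n1) (hn2 : 0 ≤ n2) (hd1 : n1 ≤ p1 * q1) (hd2 : n2 ≤ p2 * q2)
    (hr : r^2 ≤ n1 * n2) :
    (p1 - p2)^2 + (n1 + n2 - 2*r) ≤ 1 := by
  have hA : 0 ≤ p1*p2 + q1*q2 :=
    add_nonneg (mul_nonneg hp1 hp2) (mul_nonneg hq1 hq2)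
  have h4 : n1*n2 ≤ (p1*q1)*(p2*q2) :=
    mul_le_mul hd1 hd2 hn2 (mul_nonneg hp1 hq1)
  have h6 : (2*r)^2 ≤ (p1*p2 + q1*q2)^2 := by
    nlinarith [sq_nonneg (p1*p2 - q1*q2)]
  have h7 := (abs_le_of_sq_le_sq' h6 hA).1
  nlinarith [hd1, hd2, h7]

lemma diff_bound {ρ σ : Matrix (Fin 2) (Fin 2) ℂ} (hρ : IsDensityOp ρ)
    (hσ : IsDensityOp σ) :
    ((ρ 0 0).re - (σ 0 0).re)^2 + Complex.normSq (ρ 0 1 - σ 0 1) ≤ 1 := by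
  obtain ⟨_, _, _, hs1, hp1, hq1, hd1⟩ := density_facts hρ
  obtain ⟨_, _, _, hs2, hp2, hq2, hd2⟩ := density_facts hσ
  have hr : ((ρ 0 1).re * (σ 0 1).re + (ρ 0 1).im * (σ 0 1).im)^2
      ≤ Complex.normSq (ρ 0 1) * Complex.normSq (σ 0 1) := by
    simp only [Complex.normSq_apply]
    nlinarith [sq_nonneg ((ρ 0 1).re * (σ 0 1).im - (ρ 0 1).im * (σ 0 1).re)]
  have hexp : Complex.normSq (ρ 0 1 - σ 0 1) =
      Complex.normSq (ρ 0 1) + Complex.normSq (σ 0 1)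
        - 2*((ρ 0 1).re * (σ 0 1).re + (ρ 0 1).im * (σ 0 1).im) := by
    simp only [Complex.normSq_apply, Complex.sub_re, Complex.sub_im]; ring
  rw [hexp]
  exact key_real _ _ _ _ _ _ _ hp1 hq1 hp2 hq2 hs1 hs2
    (Complex.normSq_nonneg _) (Complex.normSq_nonneg _) hd1 hd2 hr

theorem stmt2 (ρ00 ρ01 ρ10 ρ11 : Matrix (Fin 2) (Fin 2) ℂ)
    (h00 : IsDensityOp ρ00) (h01 : IsDensityOp ρ01)
    (h10 : IsDensityOp ρ10) (h11 : IsDensityOp ρ11) :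
    ((1/4) * traceNorm ((ρ00 + ρ01) - (ρ10 + ρ11)))^2
      + ((1/4) * traceNorm ((ρ00 + ρ10) - (ρ01 + ρ11)))^2 ≤ 1 := by
  obtain ⟨i00, j00, k00, s00, p00, q00, d00⟩ := density_facts h00
  obtain ⟨i01, j01, k01, s01, p01, q01, d01⟩ := density_facts h01
  obtain ⟨i10, j10, k10, s10, p10, q10, d10⟩ := density_facts h10
  obtain ⟨i11, j11, k11, s11, p11, q11, d11⟩ := density_facts h11
  set X1 := (ρ00 + ρ01) - (ρ10 + ρ11) with hX1
  set X2 := (ρ00 + ρ10) - (ρ01 + ρ11) with hX2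
  have e1 : ∀ i j, X1 i j = ρ00 i j + ρ01 i j - (ρ10 i j + ρ11 i j) := by
    intro i j; simp [hX1]
  have e2 : ∀ i j, X2 i j = ρ00 i j + ρ10 i j - (ρ01 i j + ρ11 i j) := by
    intro i j; simp [hX2]
  have hX1a : X1 1 1 = - X1 0 0 := by
    rw [e1, e1, Complex.ext_iff]
    constructor
    · simp [Complex.add_re, Complex.sub_re]; linarith
    · simp [Complex.add_im, Complex.sub_im, i00, i01, i10, i11, j00, j01, j10, j11]
  have hX2a : X2 1 1 = - X2 0 0 := by
    rw [e2, e2, Complex.ext_iff]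
    constructor
    · simp [Complex.add_re, Complex.sub_re]; linarith
    · simp [Complex.add_im, Complex.sub_im, i00, i01, i10, i11, j00, j01, j10, j11]
  have hX1b : X1 1 0 = starRingEnd ℂ (X1 0 1) := by
    rw [e1, e1, k00, k01, k10, k11]; simp
  have hX2b : X2 1 0 = starRingEnd ℂ (X2 0 1) := by
    rw [e2, e2, k00, k01, k10, k11]; simp
  have hX1c : (X1 0 0).im = 0 := by
    rw [e1]; simp [Complex.add_im, Complex.sub_im, i00, i01, i10, i11]
  have hX2c : (X2 0 0).im = 0 := by
    rw [e2]; simp [Complex.add_im, Complex.sub_im, i00, i01, i10, i11]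
  set c1 : ℝ := (X1 0 0).re^2 + Complex.normSq (X1 0 1) with hc1
  set c2 : ℝ := (X2 0 0).re^2 + Complex.normSq (X2 0 1) with hc2
  have hc1n : 0 ≤ c1 := add_nonneg (sq_nonneg _) (Complex.normSq_nonneg _)
  have hc2n : 0 ≤ c2 := add_nonneg (sq_nonneg _) (Complex.normSq_nonneg _)
  have ht1 : traceNorm X1 = 2 * Real.sqrt c1 :=
    traceNorm_of_sq_scalar hc1n (sq_scalar hX1a hX1b hX1c)
  have ht2 : traceNorm X2 = 2 * Real.sqrt c2 :=
    traceNorm_of_sq_scalar hc2n (sq_scalar hX2a hX2b hX2c)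
  rw [ht1, ht2]
  have hsq1 : ((1:ℝ)/4 * (2 * Real.sqrt c1))^2 = c1 / 4 := by
    rw [mul_pow, mul_pow, Real.sq_sqrt hc1n]; ring
  have hsq2 : ((1:ℝ)/4 * (2 * Real.sqrt c2))^2 = c2 / 4 := by
    rw [mul_pow, mul_pow, Real.sq_sqrt hc2n]; ring
  rw [hsq1, hsq2]
  -- Now show c1 + c2 ≤ 4 via the two diff bounds
  have hb1 := diff_bound h00 h11
  have hb2 := diff_bound h01 h10
  have hpar : c1 + c2 = 2 * (((ρ00 0 0).re - (ρ11 0 0).re)^2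
        + Complex.normSq (ρ00 0 1 - ρ11 0 1))
      + 2 * (((ρ01 0 0).re - (ρ10 0 0).re)^2
        + Complex.normSq (ρ01 0 1 - ρ10 0 1)) := by
    rw [hc1, hc2, e1, e1, e2, e2]
    simp only [Complex.normSq_apply, Complex.sub_re, Complex.sub_im,
      Complex.add_re, Complex.add_im]
    ring
  linarith
end

section
/- Let B₁, B₂ be Hermitian operators on ℂ² with B₁² = B₂² = 𝟙 and {B₁,B₂} = B₁B₂ + B₂B₁ = 0. For λ ∈ [0,1] define α = (1/2)(√((1+λ)/2) + √((1−λ)/2)), β = (1/2)(√((1+λ)/2) − √((1−λ)/2)), Kraus operators K± = α𝟙 ± βB₂, projectors B±|1 = (1/2)(𝟙 ± B₁), and the channel Φ(X) = (1/2)Σ_{b=±}(B_{b|1} X B_{b|1} + K_b X K_b). Then Φ(B₁) = (1/2)(1 + √(1−λ²))·B₁ and Φ(B₂) = (1/2)·B₂. -/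
open Matrix

/-- The non-selective measurement channel: an equal mixture of a projective
measurement of `B₁` and an unsharp (Lüders) measurement of `B₂` with
unsharpness parameter `l`. -/
noncomputable def measChannel (B₁ B₂ : Matrix (Fin 2) (Fin 2) ℂ) (l : ℝ)
    (X : Matrix (Fin 2) (Fin 2) ℂ) : Matrix (Fin 2) (Fin 2) ℂ :=
  let α : ℂ := (((Real.sqrt ((1 + l)/2) + Real.sqrt ((1 - l)/2)) / 2 : ℝ) : ℂ)
  let β : ℂ := (((Real.sqrt ((1 + l)/2) - Real.sqrt ((1 - l)/2)) / 2 : ℝ) : ℂ)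
  let Kp := α • (1 : Matrix (Fin 2) (Fin 2) ℂ) + β • B₂
  let Km := α • (1 : Matrix (Fin 2) (Fin 2) ℂ) - β • B₂
  let Bp := (1/2 : ℂ) • ((1 : Matrix (Fin 2) (Fin 2) ℂ) + B₁)
  let Bm := (1/2 : ℂ) • ((1 : Matrix (Fin 2) (Fin 2) ℂ) - B₁)
  (1/2 : ℂ) • (Bp * X * Bp + Bm * X * Bm + Kp * X * Kp + Km * X * Km)

theorem stmt11 (B₁ B₂ : Matrix (Fin 2) (Fin 2) ℂ)
    (h₁ : B₁.IsHermitian) (h₂ : B₂.IsHermitian)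
    (hB1 : B₁ * B₁ = 1) (hB2 : B₂ * B₂ = 1)
    (hAC : B₁ * B₂ + B₂ * B₁ = 0)
    (l : ℝ) (hl : l ∈ Set.Icc (0:ℝ) 1) :
    measChannel B₁ B₂ l B₁
        = ((((1 + Real.sqrt (1 - l^2)) / 2 : ℝ) : ℂ)) • B₁ ∧
    measChannel B₁ B₂ l B₂ = (1/2 : ℂ) • B₂ := by
  obtain ⟨hl0, hl1⟩ := hl
  have h21 : B₂ * B₁ = -(B₁ * B₂) := eq_neg_of_add_eq_zero_right hAC
  have h1x : ∀ X : Matrix (Fin 2) (Fin 2) ℂ, B₁ * (B₁ * X) = X := fun X => by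
    rw [← mul_assoc, hB1, one_mul]
  have h2x : ∀ X : Matrix (Fin 2) (Fin 2) ℂ, B₂ * (B₂ * X) = X := fun X => by
    rw [← mul_assoc, hB2, one_mul]
  have h21x : ∀ X : Matrix (Fin 2) (Fin 2) ℂ, B₂ * (B₁ * X) = -(B₁ * (B₂ * X)) := fun X => by
    rw [← mul_assoc, h21, neg_mul, mul_assoc]
  have ha2R : Real.sqrt ((1+l)/2) ^ 2 = (1+l)/2 := Real.sq_sqrt (by linarith)
  have hb2R : Real.sqrt ((1-l)/2) ^ 2 = (1-l)/2 := Real.sq_sqrt (by linarith)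
  have habR : Real.sqrt ((1+l)/2) * Real.sqrt ((1-l)/2) = Real.sqrt (1-l^2)/2 := by
    rw [← Real.sqrt_mul (by linarith), show (1+l)/2*((1-l)/2) = (1-l^2)/4 by ring,
      Real.sqrt_div (by nlinarith), show (4:ℝ) = 2^2 by norm_num,
      Real.sqrt_sq (by norm_num)]
  have ca : ((Real.sqrt ((1+l)/2) : ℝ) : ℂ)^2 = (1 + (l:ℂ))/2 := by
    rw [← Complex.ofReal_pow, ha2R]; push_cast; ring
  have cb : ((Real.sqrt ((1-l)/2) : ℝ) : ℂ)^2 = (1 - (l:ℂ))/2 := by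
    rw [← Complex.ofReal_pow, hb2R]; push_cast; ring
  have cab : ((Real.sqrt ((1+l)/2) : ℝ) : ℂ) * ((Real.sqrt ((1-l)/2) : ℝ) : ℂ)
      = ((Real.sqrt (1-l^2) : ℝ) : ℂ)/2 := by
    rw [← Complex.ofReal_mul, habR]; push_cast; ring
  set a : ℝ := Real.sqrt ((1+l)/2) with ha
  set b : ℝ := Real.sqrt ((1-l)/2) with hb
  clear_value a b
  constructor <;>
  · simp only [measChannel]
    rw [← ha, ← hb]
    simp [mul_add, add_mul, mul_sub, sub_mul, smul_mul_assoc, mul_smul_comm, smul_smul,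
      mul_assoc, hB1, hB2, h21, h1x, h2x, h21x, smul_add, smul_sub]
    match_scalars
    all_goals (try push_cast)
    all_goals (try ring)
    all_goals (try linear_combination cab)
    all_goals (try linear_combination (ca + cb)/2)
    all_goals (linear_combination cab + (ca + cb)/2)
end

section
/- Fix ω ∈ (0, π/2), r ∈ (0,1], ε > 0. Define λ₁ = (1+ε)·tan(ω/2)/r and, for k ≥ 2, λ_k = (1+ε)·(2^{k−1} − cos(ω)·M_k)/(r·sin(ω)), where M_k = ∏_{l=1}^{k−1}(1 + √(1−λ_l²)). If λ_j < 1 for all j ≤ k, then λ_{k+1} > 2λ_k; in particular the sequence is strictly increasing and positive as long as all its terms stay below 1. -/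
theorem stmt14 (ω r ε : ℝ)
    (hω : ω ∈ Set.Ioo 0 (Real.pi/2)) (hr : r ∈ Set.Ioc (0:ℝ) 1) (hε : 0 < ε)
    (lam : ℕ → ℝ)
    (h1 : lam 1 = (1+ε) * Real.tan (ω/2) / r)
    (hk : ∀ k, 2 ≤ k → lam k =
      (1+ε) * (2^(k-1) - Real.cos ω *
          ∏ l ∈ Finset.Icc 1 (k-1), (1 + Real.sqrt (1 - (lam l)^2)))
        / (r * Real.sin ω)) :
    ∀ k, 1 ≤ k → (∀ j, 1 ≤ j → j ≤ k → lam j < 1) →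
      2 * lam k < lam (k+1) := by
  obtain ⟨hω0, hω2⟩ := hω
  obtain ⟨hr0, -⟩ := hr
  have hpi := Real.pi_pos
  have hsin : 0 < Real.sin ω :=
    Real.sin_pos_of_pos_of_lt_pi hω0 (by linarith)
  have hcos : 0 < Real.cos ω := Real.cos_pos_of_mem_Ioo ⟨by linarith, hω2⟩
  have hε1 : (0:ℝ) < 1 + ε := by linarith
  have hden : 0 < r * Real.sin ω := mul_pos hr0 hsin
  have step : ∀ k, 1 ≤ k → 0 < lam k → 2 * lam k < lam (k+1) := by
    intro k hk1 hpos
    have hs : Real.sqrt (1 - lam k ^ 2) < 1 := by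
      rw [Real.sqrt_lt' one_pos]
      nlinarith
    have hs0 : 0 ≤ Real.sqrt (1 - lam k ^ 2) := Real.sqrt_nonneg _
    rcases eq_or_lt_of_le hk1 with h | h
    · -- k = 1
      subst h
      rw [hk 2 le_rfl]
      simp only [show (2:ℕ) - 1 = 1 from rfl, Finset.Icc_self, Finset.prod_singleton,
        pow_one]
      set s := Real.sqrt (1 - lam 1 ^ 2) with hsdef
      have hsin2 : Real.sin ω = 2 * Real.sin (ω/2) * Real.cos (ω/2) := by
        rw [← Real.sin_two_mul]; ring_nf
      have hcos2 : Real.cos ω = 2 * Real.cos (ω/2)^2 - 1 := by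
        rw [← Real.cos_two_mul]; ring_nf
      have hcoshalf : 0 < Real.cos (ω/2) :=
        Real.cos_pos_of_mem_Ioo ⟨by linarith, by linarith⟩
      have hsinhalf : 0 < Real.sin (ω/2) :=
        Real.sin_pos_of_pos_of_lt_pi (by linarith) (by linarith)
      have hpyth : Real.sin (ω/2)^2 + Real.cos (ω/2)^2 = 1 :=
        Real.sin_sq_add_cos_sq _
      have htan2 : Real.tan (ω/2) = (1 - Real.cos ω) / Real.sin ω := by
        rw [Real.tan_eq_sin_div_cos, hsin2, hcos2]
        field_simp
        nlinarith [hpyth]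
      rw [h1, htan2, ← sub_pos]
      have key : (1+ε) * (2 - Real.cos ω * (1 + s)) / (r * Real.sin ω)
          - 2 * ((1+ε) * ((1 - Real.cos ω) / Real.sin ω) / r)
          = (1+ε) * Real.cos ω * (1 - s) / (r * Real.sin ω) := by
        field_simp
        ring
      rw [key]
      apply div_pos (mul_pos (mul_pos hε1 hcos) (by linarith)) hden
    · -- k ≥ 2
      have hk2 : 2 ≤ k := h
      obtain ⟨m, rfl⟩ : ∃ m, k = m + 2 := ⟨k - 2, by omega⟩
      rw [hk (m+2) (by omega), hk (m+2+1) (by omega)]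
      have e1 : m + 2 - 1 = m + 1 := rfl
      have e2 : m + 2 + 1 - 1 = m + 2 := rfl
      rw [e1, e2]
      rw [Finset.prod_Icc_succ_top (by omega : 1 ≤ m + 2)]
      set M := ∏ l ∈ Finset.Icc 1 (m+1), (1 + Real.sqrt (1 - (lam l)^2)) with hM
      have hMpos : 0 < M := by
        apply Finset.prod_pos
        intro i _
        positivity
      set s := Real.sqrt (1 - lam (m+2) ^ 2) with hsdef
      rw [← sub_pos]
      have key : (1+ε) * (2^(m+2) - Real.cos ω * (M * (1 + s))) / (r * Real.sin ω)
          - 2 * ((1+ε) * (2^(m+1) - Real.cos ω * M) / (r * Real.sin ω))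
          = (1+ε) * Real.cos ω * M * (1 - s) / (r * Real.sin ω) := by
        rw [show ∀ a b : ℝ, a / (r * Real.sin ω) - 2 * (b / (r * Real.sin ω))
            = (a - 2 * b) / (r * Real.sin ω) from fun a b => by ring]
        congr 1
        rw [pow_succ]
        ring
      rw [key]
      exact div_pos (mul_pos (mul_pos (mul_pos hε1 hcos) hMpos) (by linarith)) hden
  have pos : ∀ k, 1 ≤ k → 0 < lam k := by
    intro k
    induction k with
    | zero => omega
    | succ n ih =>
      intro _
      rcases Nat.eq_or_lt_of_le (show 1 ≤ n + 1 by omega) with h | h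
      · rw [← h, h1]
        have hcoshalf : 0 < Real.cos (ω/2) :=
          Real.cos_pos_of_mem_Ioo ⟨by linarith, by linarith⟩
        have hsinhalf : 0 < Real.sin (ω/2) :=
          Real.sin_pos_of_pos_of_lt_pi (by linarith) (by linarith)
        have htan : 0 < Real.tan (ω/2) := by
          rw [Real.tan_eq_sin_div_cos]; positivity
        positivity
      · have hn1 : 1 ≤ n := by omega
        have := step n hn1 (ih hn1)
        linarith [ih hn1]
  intro k hk1 _
  exact step k hk1 (pos k hk1)
end

section
/- With the recursive definition λ₁ = (1+ε)tan(ω/2)/r and λ_k = (1+ε)(2^{k−1} − cos(ω)M_k)/(r sin ω) for k ≥ 2 (M_k = ∏_{l<k}(1+√(1−λ_l²))), for every fixed N and every ε > 0, r ∈ (0,1], there exists ω₀ > 0 such that for all ω ∈ (0, ω₀) the terms λ₁, …, λ_N all lie in (0,1). In particular λ_k(ω) → 0 as ω → 0⁺ for each fixed k. -/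
set_option maxHeartbeats 8000000 in
theorem stmt15 (r ε : ℝ) (hr : r ∈ Set.Ioc (0:ℝ) 1) (hε : 0 < ε)
    (lam : ℝ → ℕ → ℝ)
    (h1 : ∀ ω, lam ω 1 = (1+ε) * Real.tan (ω/2) / r)
    (hk : ∀ ω, ∀ k, 2 ≤ k → lam ω k =
      (1+ε) * (2^(k-1) - Real.cos ω *
          ∏ l ∈ Finset.Icc 1 (k-1), (1 + Real.sqrt (1 - (lam ω l)^2)))
        / (r * Real.sin ω)) :
    (∀ N : ℕ, ∃ ω₀ > 0, ∀ ω : ℝ, 0 < ω → ω < ω₀ →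
      ∀ k, 1 ≤ k → k ≤ N → lam ω k ∈ Set.Ioo (0:ℝ) 1) ∧
    (∀ k, 1 ≤ k →
      Filter.Tendsto (fun ω => lam ω k) (nhdsWithin 0 (Set.Ioi 0)) (nhds 0)) := by
  obtain ⟨hr0, hr1⟩ := hr
  have key : ∀ k, 1 ≤ k → ∃ C, 0 < C ∧ ∀ᶠ ω in nhdsWithin 0 (Set.Ioi 0),
      0 < lam ω k ∧ lam ω k ≤ C * ω := by
    intro k
    induction k using Nat.strong_induction_on with
    | _ k ih =>
    intro hk1
    by_cases hk2 : 2 ≤ k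
    · -- recursive case
      have hCl : ∀ l, ∃ C, 0 < C ∧ (l ∈ Finset.Icc 1 (k-1) →
          ∀ᶠ ω in nhdsWithin 0 (Set.Ioi 0), 0 < lam ω l ∧ lam ω l ≤ C * ω) := by
        intro l
        by_cases hl : l ∈ Finset.Icc 1 (k-1)
        · obtain ⟨hl1, hl2⟩ := Finset.mem_Icc.1 hl
          obtain ⟨C, hC, hev⟩ := ih l (by omega) hl1
          exact ⟨C, hC, fun _ => hev⟩
        · exact ⟨1, one_pos, fun h => absurd h hl⟩
      choose c hc0 hcev using hCl
      have hne : (Finset.Icc 1 (k-1)).Nonempty := ⟨1, Finset.mem_Icc.2 ⟨le_refl 1, by omega⟩⟩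
      obtain ⟨C0, hC0pos, hC0l⟩ : ∃ C0, 0 < C0 ∧ ∀ l ∈ Finset.Icc 1 (k-1), c l ≤ C0 := by
        refine ⟨(Finset.Icc 1 (k-1)).sup' hne c, ?_, fun l hl => Finset.le_sup' c hl⟩
        obtain ⟨l, hl⟩ := hne
        exact lt_of_lt_of_le (hc0 l) (Finset.le_sup' c hl)
      set B : ℝ := (1+ε) * 2^(k-1) * (1 + (k-1 : ℕ) * C0^2) with hBdef
      have hBpos : 0 < B := by positivity
      set C : ℝ := 2*B/r + 1 with hCdef
      have hCpos : 0 < C := by positivity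
      refine ⟨C, hCpos, ?_⟩
      have hall : ∀ᶠ ω in nhdsWithin 0 (Set.Ioi 0), ∀ l ∈ Finset.Icc 1 (k-1),
          0 < lam ω l ∧ lam ω l ≤ C0 * ω := by
        rw [Filter.eventually_all_finset]
        intro l hl
        filter_upwards [hcev l hl, self_mem_nhdsWithin] with ω h hω
        refine ⟨h.1, h.2.trans ?_⟩
        have hω0 : (0:ℝ) < ω := hω
        nlinarith [hC0l l hl]
      have hδ : (0:ℝ) < min 1 (1 / C0) := lt_min one_pos (by positivity)
      filter_upwards [hall, Ioo_mem_nhdsGT_of_mem (Set.left_mem_Ico.2 hδ)] with ω hlam hωδ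
      obtain ⟨hω0, hωδ'⟩ := hωδ
      have hω1 : ω ≤ 1 := le_of_lt (lt_of_lt_of_le hωδ' (min_le_left _ _))
      have hωC : C0 * ω ≤ 1 := by
        have h := lt_of_lt_of_le hωδ' (min_le_right _ _)
        rw [lt_div_iff₀ hC0pos] at h
        nlinarith
      have hπ := Real.pi_gt_three
      have hsinpos : 0 < Real.sin ω := Real.sin_pos_of_pos_of_lt_pi hω0 (by linarith)
      have hsinlb : ω / 2 ≤ Real.sin ω := by
        have h2 : ω ≤ Real.pi/2 := by nlinarith
        have h3 := Real.mul_le_sin hω0.le h2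
        have h4 : (1:ℝ)/2 ≤ 2/Real.pi := by
          rw [div_le_div_iff₀ (by norm_num) Real.pi_pos]
          nlinarith [Real.pi_le_four]
        nlinarith
      have hcospos : 0 < Real.cos ω :=
        Real.cos_pos_of_mem_Ioo ⟨by linarith, by linarith⟩
      have hcosle : Real.cos ω ≤ 1 := Real.cos_le_one ω
      have hcoslt : Real.cos ω < 1 := by nlinarith [Real.sin_sq_add_cos_sq ω]
      have hcoslb : 1 - ω^2/2 ≤ Real.cos ω := Real.one_sub_sq_div_two_le_cos
      set M := ∏ l ∈ Finset.Icc 1 (k-1), (1 + Real.sqrt (1 - (lam ω l)^2)) with hM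
      have hfac : ∀ l ∈ Finset.Icc 1 (k-1),
          (2 - C0^2 * ω^2 ≤ 1 + Real.sqrt (1 - (lam ω l)^2) ∧
           1 + Real.sqrt (1 - (lam ω l)^2) ≤ 2) := by
        intro l hl
        obtain ⟨hpos, hle⟩ := hlam l hl
        have hlam1 : lam ω l ≤ 1 := by nlinarith
        have hy0 : 0 ≤ 1 - (lam ω l)^2 := by nlinarith
        have hy1 : 1 - (lam ω l)^2 ≤ 1 := by nlinarith
        constructor
        · have hs : 1 - (lam ω l)^2 ≤ Real.sqrt (1 - (lam ω l)^2) := by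
            nlinarith [Real.sq_sqrt hy0, Real.sqrt_nonneg (1 - (lam ω l)^2)]
          nlinarith
        · have := Real.sqrt_le_one.2 hy1
          linarith
      have hcard : (Finset.Icc 1 (k-1)).card = k - 1 := by
        rw [Nat.card_Icc]; omega
      have hMub : M ≤ 2^(k-1) := by
        calc M ≤ ∏ _l ∈ Finset.Icc 1 (k-1), (2:ℝ) :=
              Finset.prod_le_prod (fun l hl => by
                have := Real.sqrt_nonneg (1 - (lam ω l)^2); linarith)
                (fun l hl => (hfac l hl).2)
          _ = 2^(k-1) := by rw [Finset.prod_const, hcard]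
      have ha0 : 0 ≤ C0^2 * ω^2 := by positivity
      have ha1 : C0^2 * ω^2 ≤ 1 := by nlinarith [hωC, mul_nonneg hC0pos.le hω0.le]
      have hMlb : (2 - C0^2*ω^2)^(k-1) ≤ M := by
        calc (2 - C0^2*ω^2)^(k-1) = ∏ _l ∈ Finset.Icc 1 (k-1), (2 - C0^2*ω^2) := by
              rw [Finset.prod_const, hcard]
          _ ≤ M := Finset.prod_le_prod (fun l hl => by linarith)
              (fun l hl => (hfac l hl).1)
      have hbern : (2:ℝ)^(k-1) * (1 - (k-1 : ℕ) * (C0^2*ω^2) / 2) ≤ (2 - C0^2*ω^2)^(k-1) := by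
        have h := one_add_mul_le_pow (a := -(C0^2*ω^2/2)) (by linarith) (k-1)
        have h2 : ((2:ℝ) - C0^2*ω^2)^(k-1) = 2^(k-1) * (1 + -(C0^2*ω^2/2))^(k-1) := by
          have he : (2:ℝ) - C0^2*ω^2 = 2 * (1 + -(C0^2*ω^2/2)) := by ring
          rw [he, mul_pow]
        rw [h2]
        have hp : (0:ℝ) < 2^(k-1) := by positivity
        nlinarith
      have hMlb2 : (2:ℝ)^(k-1) * (1 - (k-1 : ℕ) * (C0^2*ω^2) / 2) ≤ M := hbern.trans hMlb
      have hMpos : 0 < M := Finset.prod_pos (fun l hl => by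
        have := Real.sqrt_nonneg (1 - (lam ω l)^2); linarith)
      rw [hk ω k hk2, ← hM]
      have hp2 : (0:ℝ) < 2^(k-1) := by positivity
      constructor
      · apply div_pos (mul_pos (by linarith) (by nlinarith)) (mul_pos hr0 hsinpos)
      · rw [div_le_iff₀ (by positivity)]
        have hnum : (1+ε) * (2^(k-1) - Real.cos ω * M) ≤ B * ω^2 := by
          have hkey : (2:ℝ)^(k-1) - Real.cos ω * M ≤
              2^(k-1) * (ω^2/2) + 2^(k-1) * ((k-1:ℕ) * (C0^2*ω^2)/2) := by
            nlinarith [mul_le_mul_of_nonneg_left hMlb2 hcospos.le,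
              mul_nonneg (mul_nonneg (Nat.cast_nonneg (k-1) : (0:ℝ) ≤ (k-1:ℕ)) ha0) hp2.le]
          have hnn : (0:ℝ) ≤ 2^(k-1) * (ω^2/2) + 2^(k-1) * ((k-1:ℕ) * (C0^2*ω^2)/2) := by
            positivity
          calc (1+ε) * (2^(k-1) - Real.cos ω * M)
              ≤ (1+ε) * (2^(k-1) * (ω^2/2) + 2^(k-1) * ((k-1:ℕ) * (C0^2*ω^2)/2)) := by
                nlinarith
            _ ≤ B * ω^2 := by rw [hBdef]; ring_nf; nlinarith [sq_nonneg ω, hp2]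
        have hCr : (C - 1) * r = 2*B := by
          rw [hCdef]; field_simp; ring
        have hstep : B * ω^2 ≤ C * ω * (r * Real.sin ω) := by
          have h5 : 0 ≤ C * ω * r * (Real.sin ω - ω/2) :=
            mul_nonneg (by positivity) (by linarith)
          have h8 : C * r = 2*B + r := by linear_combination hCr
          calc B * ω^2 ≤ (2*B + r) * (ω^2/2) := by
                nlinarith [mul_pos hr0 (mul_pos hω0 hω0)]
            _ = C * r * (ω^2/2) := by rw [h8]
            _ ≤ C * ω * (r * Real.sin ω) := by nlinarith [h5]
        linarith
    · -- base case k = 1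
      have hkeq : k = 1 := by omega
      subst hkeq
      refine ⟨(1+ε)/r, by positivity, ?_⟩
      filter_upwards [Ioo_mem_nhdsGT_of_mem (Set.left_mem_Ico.2 one_pos)] with ω hω
      obtain ⟨hω0, hω1⟩ := hω
      have hπ := Real.pi_gt_three
      have htanpos : 0 < Real.tan (ω/2) :=
        Real.tan_pos_of_pos_of_lt_pi_div_two (by linarith) (by linarith)
      have htanle : Real.tan (ω/2) ≤ ω := by
        have hc : (1:ℝ)/2 ≤ Real.cos (ω/2) := by
          have := Real.one_sub_sq_div_two_le_cos (x := ω/2)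
          nlinarith
        have hs : Real.sin (ω/2) ≤ ω/2 := Real.sin_le (by linarith)
        rw [Real.tan_eq_sin_div_cos, div_le_iff₀ (by linarith)]
        nlinarith
      rw [h1 ω]
      refine ⟨div_pos (mul_pos (by linarith) htanpos) hr0, ?_⟩
      rw [div_le_iff₀ hr0]
      have h6 : (1+ε)/r * r = 1+ε := div_mul_cancel₀ _ hr0.ne'
      nlinarith
  constructor
  · intro N
    have hev : ∀ᶠ ω in nhdsWithin 0 (Set.Ioi 0),
        ∀ k ∈ Finset.Icc 1 N, lam ω k ∈ Set.Ioo (0:ℝ) 1 := by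
      rw [Filter.eventually_all_finset]
      intro k hkm
      obtain ⟨hk1, hkN⟩ := Finset.mem_Icc.1 hkm
      obtain ⟨C, hC, hevk⟩ := key k hk1
      filter_upwards [hevk, Ioo_mem_nhdsGT_of_mem
        (Set.left_mem_Ico.2 (show (0:ℝ) < 1/C by positivity))] with ω h hω
      obtain ⟨hω0, hωC⟩ := hω
      refine ⟨h.1, lt_of_le_of_lt h.2 ?_⟩
      rw [lt_div_iff₀ hC] at hωC
      nlinarith
    obtain ⟨u, hu, hsub⟩ := mem_nhdsGT_iff_exists_Ioo_subset.1 hev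
    exact ⟨u, hu, fun ω h0 hu' k hk1 hkN =>
      hsub ⟨h0, hu'⟩ k (Finset.mem_Icc.2 ⟨hk1, hkN⟩)⟩
  · intro k hk1
    obtain ⟨C, hC, hevk⟩ := key k hk1
    apply squeeze_zero' (hevk.mono fun ω h => h.1.le) (hevk.mono fun ω h => h.2)
    have h7 : Filter.Tendsto (fun ω : ℝ => C * ω) (nhds 0) (nhds 0) := by
      have h8 : Filter.Tendsto (fun ω : ℝ => C * ω) (nhds 0) (nhds (C * 0)) :=
        Filter.tendsto_id.const_mul C
      simpa using h8
    exact h7.mono_left nhdsWithin_le_nhds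
end

section
/- Let c : ℕ → ℝ be defined by c₁ = c (a fixed positive real) and c_k = 2^{k−1}·c·(1 + Σ_{j=1}^{k−1} c_j²/2) for k ≥ 2. Then each c_k is a polynomial in c containing only odd powers of c, with lowest-degree term 2^{k−1}·c and highest-degree term of degree 2^k − 1. -/
open Polynomial

noncomputable def Raux19 : ℕ → Polynomial ℝ
  | 0 => 1
  | 1 => 1
  | (k+2) => Polynomial.C ((2:ℝ)^(k+1)) *
      (1 + ∑ j ∈ (Finset.Icc 1 (k+1)).attach,
        Polynomial.X * (Raux19 j.1)^2 * Polynomial.C ((1:ℝ)/2))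
  decreasing_by have := (Finset.mem_Icc.mp j.2).2; omega

lemma Raux19_eq (k : ℕ) (h : 2 ≤ k) : Raux19 k = Polynomial.C ((2:ℝ)^(k-1)) *
    (1 + ∑ j ∈ Finset.Icc 1 (k-1), Polynomial.X * (Raux19 j)^2 * Polynomial.C ((1:ℝ)/2)) := by
  obtain ⟨m, rfl⟩ : ∃ m, k = m + 2 := ⟨k - 2, by omega⟩
  rw [show m+2-1 = m+1 from rfl, Raux19]
  rw [Finset.sum_attach (Finset.Icc 1 (m+1)) (fun j => Polynomial.X * (Raux19 j)^2 * Polynomial.C ((1:ℝ)/2))]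

lemma seq_eval19 (seq : ℝ → ℕ → ℝ)
    (h1 : ∀ c : ℝ, seq c 1 = c)
    (hk : ∀ c : ℝ, ∀ k, 2 ≤ k → seq c k =
      2^(k-1) * c * (1 + ∑ j ∈ Finset.Icc 1 (k-1), (seq c j)^2 / 2)) :
    ∀ k, 1 ≤ k → ∀ c : ℝ, seq c k = c * (Raux19 k).eval (c^2) := by
  intro k
  induction k using Nat.strong_induction_on with
  | _ k ih =>
    intro hk1 c
    rcases eq_or_lt_of_le hk1 with h | h
    · rw [← h, h1]; simp [Raux19]
    · have h2 : 2 ≤ k := h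
      rw [hk c k h2, Raux19_eq k h2]
      simp only [eval_mul, eval_add, eval_one, eval_C, eval_X, eval_pow,
        eval_finset_sum, eval_ofNat]
      rw [Finset.sum_congr rfl (fun j hj => by
        rw [ih j (by have := (Finset.mem_Icc.mp hj).2; omega) (Finset.mem_Icc.mp hj).1 c])]
      rw [Finset.sum_congr rfl (fun j _ => by
        show (c * eval (c^2) (Raux19 j))^2/2 = c^2 * (eval (c^2) (Raux19 j))^2 * (1/2)
        ring)]
      ring

lemma sq_coeff_nonneg19 (p : Polynomial ℝ) (hp : ∀ n, 0 ≤ p.coeff n) (m : ℕ) :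
    0 ≤ (p * p).coeff m := by
  rw [Polynomial.coeff_mul]
  exact Finset.sum_nonneg fun x _ => mul_nonneg (hp x.1) (hp x.2)

lemma sq_coeff_pos19 (p : Polynomial ℝ) (hp : ∀ n, 0 ≤ p.coeff n) (d : ℕ)
    (h : 0 < p.coeff d) : 0 < (p * p).coeff (d + d) := by
  rw [Polynomial.coeff_mul]
  apply Finset.sum_pos' (fun x _ => mul_nonneg (hp x.1) (hp x.2))
  exact ⟨(d, d), by simp, mul_pos h h⟩

lemma Raux19_facts : ∀ k, 1 ≤ k →
    (Raux19 k).coeff 0 = 2^(k-1) ∧ (∀ n, 0 ≤ (Raux19 k).coeff n) ∧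
    (Raux19 k).natDegree ≤ 2^(k-1) - 1 ∧ 0 < (Raux19 k).coeff (2^(k-1)-1) := by
  intro k
  induction k using Nat.strong_induction_on with
  | _ k ih =>
    intro hk1
    rcases eq_or_lt_of_le hk1 with h | h
    · rw [← h]
      have hR : Raux19 1 = 1 := by rw [Raux19]
      rw [hR]
      refine ⟨by simp, fun n => ?_, by simp, by simp⟩
      rw [Polynomial.coeff_one]
      positivity
    · have h2 : 2 ≤ k := h
      rw [Raux19_eq k h2]
      -- abbreviations
      have hX : ∀ (q : Polynomial ℝ) (n : ℕ),
          (Polynomial.X * q * Polynomial.C ((1:ℝ)/2)).coeff (n+1) = q.coeff n * (1/2) := by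
        intro q n
        rw [Polynomial.coeff_mul_C, Polynomial.coeff_X_mul]
      have hX0 : ∀ (q : Polynomial ℝ),
          (Polynomial.X * q * Polynomial.C ((1:ℝ)/2)).coeff 0 = 0 := by
        intro q
        rw [Polynomial.coeff_mul_C, Polynomial.mul_coeff_zero, Polynomial.coeff_X_zero,
          zero_mul, zero_mul]
      have hmem : ∀ j ∈ Finset.Icc 1 (k-1), j < k ∧ 1 ≤ j := by
        intro j hj
        have := Finset.mem_Icc.mp hj
        omega
      have hnn : ∀ j ∈ Finset.Icc 1 (k-1), ∀ n,
          0 ≤ (Polynomial.X * (Raux19 j)^2 * Polynomial.C ((1:ℝ)/2)).coeff n := by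
        intro j hj n
        obtain ⟨hjk, hj1⟩ := hmem j hj
        match n with
        | 0 => rw [hX0]
        | (n+1) =>
          rw [hX]
          have := sq_coeff_nonneg19 (Raux19 j) (ih j hjk hj1).2.1 n
          rw [← sq] at this
          positivity
      refine ⟨?_, ?_, ?_, ?_⟩
      · simp only [Polynomial.coeff_C_mul, Polynomial.coeff_add, Polynomial.coeff_one,
          Polynomial.finset_sum_coeff]
        rw [Finset.sum_congr rfl (fun j _ => hX0 ((Raux19 j)^2))]
        simp
      · intro n
        simp only [Polynomial.coeff_C_mul, Polynomial.coeff_add, Polynomial.coeff_one,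
          Polynomial.finset_sum_coeff]
        have : 0 ≤ ∑ j ∈ Finset.Icc 1 (k-1),
            (Polynomial.X * (Raux19 j)^2 * Polynomial.C ((1:ℝ)/2)).coeff n :=
          Finset.sum_nonneg (fun j hj => hnn j hj n)
        positivity
      · apply le_trans (Polynomial.natDegree_C_mul_le _ _)
        apply le_trans (Polynomial.natDegree_add_le _ _)
        rw [Polynomial.natDegree_one]
        simp only [max_le_iff, Nat.zero_le, true_and]
        apply Polynomial.natDegree_sum_le_of_forall_le
        intro j hj
        obtain ⟨hjk, hj1⟩ := hmem j hj
        apply le_trans (Polynomial.natDegree_mul_le)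
        rw [Polynomial.natDegree_C]
        apply le_trans (Nat.add_le_add_right (Polynomial.natDegree_mul_le) 0)
        rw [Polynomial.natDegree_X]
        have hp : (Raux19 j ^ 2).natDegree ≤ 2 * (Raux19 j).natDegree :=
          Polynomial.natDegree_pow_le
        have hd := (ih j hjk hj1).2.2.1
        have h1j : 1 ≤ 2^(j-1) := Nat.one_le_two_pow
        have h1k : 2^j ≤ 2^(k-1) := Nat.pow_le_pow_right (by norm_num) (by omega)
        have h2j : 2^j = 2 * 2^(j-1) := by
          rw [← pow_succ']
          congr 1
          omega
        omega
      · have hD : 2^(k-1) - 1 = (2^(k-1) - 2) + 1 := by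
          have : 2 ≤ 2^(k-1) := by
            calc 2 = 2^1 := rfl
            _ ≤ 2^(k-1) := Nat.pow_le_pow_right (by norm_num) (by omega)
          omega
        simp only [Polynomial.coeff_C_mul, Polynomial.coeff_add, Polynomial.coeff_one,
          Polynomial.finset_sum_coeff]
        rw [hD]
        simp only [Nat.add_eq_zero, and_false, if_false, one_ne_zero]
        have hpos : 0 < ∑ j ∈ Finset.Icc 1 (k-1),
            (Polynomial.X * (Raux19 j)^2 * Polynomial.C ((1:ℝ)/2)).coeff ((2^(k-1)-2)+1) := by
          apply Finset.sum_pos' (fun j hj => hnn j hj _)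
          refine ⟨k-1, Finset.mem_Icc.mpr ⟨by omega, le_refl _⟩, ?_⟩
          rw [hX]
          have hsplit : 2^(k-1) - 2 = (2^(k-2)-1) + (2^(k-2)-1) := by
            have h1 : 1 ≤ 2^(k-2) := Nat.one_le_two_pow
            have h2 : 2^(k-1) = 2 * 2^(k-2) := by
              rw [← pow_succ']
              congr 1
              omega
            omega
          rw [hsplit, sq]
          have hik := ih (k-1) (by omega) (by omega)
          have := sq_coeff_pos19 (Raux19 (k-1)) hik.2.1 (2^((k-1)-1)-1) hik.2.2.2
          rw [show (k-1)-1 = k-2 from rfl] at this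
          positivity
        positivity

theorem stmt19 (seq : ℝ → ℕ → ℝ)
    (h1 : ∀ c : ℝ, seq c 1 = c)
    (hk : ∀ c : ℝ, ∀ k, 2 ≤ k → seq c k =
      2^(k-1) * c * (1 + ∑ j ∈ Finset.Icc 1 (k-1), (seq c j)^2 / 2)) :
    ∀ k, 1 ≤ k → ∃ b : ℕ → ℝ,
      (∀ c : ℝ, 0 < c →
        seq c k = ∑ n ∈ Finset.range (2^(k-1)), b n * c^(2*n+1)) ∧
      b 0 = 2^(k-1) ∧ b (2^(k-1) - 1) ≠ 0 := by
  intro k hk1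
  obtain ⟨hc0, hnn, hdeg, hlead⟩ := Raux19_facts k hk1
  refine ⟨fun n => (Raux19 k).coeff n, ?_, ?_, ne_of_gt hlead⟩
  · intro c _
    rw [seq_eval19 seq h1 hk k hk1 c]
    have hlt : (Raux19 k).natDegree < 2^(k-1) := by
      have : 1 ≤ 2^(k-1) := Nat.one_le_two_pow
      omega
    rw [Polynomial.eval_eq_sum_range' hlt, Finset.mul_sum]
    apply Finset.sum_congr rfl
    intro n _
    ring
  · exact hc0
end
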